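/- arXiv:math/0308039 — 3 statements merged into one kernel-verified Lean document; each statement's English description precedes it below -/
import Mathlib

section
/- For every odd positive integer m and every natural number j, the equality 𝔉(X^j / (X^m − 1)) = X^{γ_m(j)} / (X^m − 1) holds in RatFunc ℂ. -/
/-- The `n`-th coefficient of the Laurent expansion at `0` of a rational function. -/
noncomputable def coeffL (R : RatFunc ℂ) (n : ℤ) : ℂ :=
  ((R : LaurentSeries ℂ)).coeff n

/-- The map `γ_m : ℤ → ℤ`, `γ_m(j) = (m-1+j)/2` if `j` is even and `(j-1)/2` if `j` is odd. -/
def gammaMap (m j : ℤ) : ℤ :=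
  if Even j then (m - 1 + j) / 2 else (j - 1) / 2

/-!
Expanding `X^a / (X^m - 1) = -∑_{t ≥ 0} X^(a + m t)`, its Laurent coefficient at `n` is `-1`
when `n ∈ a + mℕ` and `0` otherwise. For odd `m` the number `c = 2 γ_m(j) + 1` is `j` or
`j + m`, so `c ≡ j (mod m)` and `j ≤ c < j + 2m`; as `2` is invertible modulo `m`, this gives
`2k + 1 ∈ j + mℕ ↔ k ∈ γ_m(j) + mℕ`, i.e. both sides have the same coefficients.
-/

open PowerSeries in
theorem PowerSeries.one_sub_X_pow_mul_expand_mk_one {R : Type*} [CommRing R] {m : ℕ}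
    (hm : m ≠ 0) : (1 - X ^ m : R⟦X⟧) * expand m hm (mk 1) = 1 := by
  simpa [mul_comm] using congrArg (expand m hm) (mk_one_mul_one_sub_eq_one R)

namespace RatFunc

variable {K : Type*} [Field K]

theorem coe_injective : Function.Injective ((↑) : RatFunc K → LaurentSeries K) :=
  (algebraMap (RatFunc K) (LaurentSeries K)).injective

open PowerSeries in
theorem coe_X_pow_div_X_pow_sub_one (a : ℕ) {m : ℕ} (hm : m ≠ 0) :
    ((X ^ a / (X ^ m - 1) : RatFunc K) : LaurentSeries K) =
      ((-(PowerSeries.X ^ a * expand m hm (mk 1)) : K⟦X⟧) : LaurentSeries K) := by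
  have hinv := congrArg (HahnSeries.ofPowerSeries ℤ K)
    (one_sub_X_pow_mul_expand_mk_one (R := K) hm)
  simp only [map_mul, map_sub, map_one, map_pow, PowerSeries.coe_X] at hinv
  have hne : (HahnSeries.single 1 1 ^ m - 1 : LaurentSeries K) ≠ 0 := by
    intro h
    rw [← neg_sub, h, neg_zero, zero_mul] at hinv
    exact zero_ne_one hinv
  rw [map_div₀, map_sub, map_pow, map_pow, map_one, coe_X, div_eq_iff hne]
  simp only [map_neg, map_mul, map_pow, PowerSeries.coe_X]
  linear_combination (-HahnSeries.single 1 1 ^ a : LaurentSeries K) * hinv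

theorem coeff_coe_X_pow_div_X_pow_sub_one (a : ℕ) {m : ℕ} (hm : m ≠ 0) (n : ℤ) :
    ((X ^ a / (X ^ m - 1) : RatFunc K) : LaurentSeries K).coeff n =
      if (a : ℤ) ≤ n ∧ (m : ℤ) ∣ n - a then -1 else 0 := by
  rw [coe_X_pow_div_X_pow_sub_one a hm, PowerSeries.coeff_coe]
  simp only [map_neg, PowerSeries.coeff_X_pow_mul', PowerSeries.coeff_expand,
    PowerSeries.coeff_mk, Pi.one_apply]
  rcases lt_or_ge n 0 with hn | hn
  · simp [hn, show ¬ (a : ℤ) ≤ n by omega]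
  obtain ⟨n, rfl⟩ := Int.eq_ofNat_of_zero_le hn
  rw [if_neg (not_lt.mpr hn), Int.natAbs_natCast]
  by_cases ha : a ≤ n
  · simp only [← Nat.cast_sub ha, Int.natCast_dvd_natCast]
    split_ifs <;> simp_all
  · simp [ha]

end RatFunc

theorem two_mul_gammaMap_add_one_eq_or {m : ℤ} (hm : Odd m) (j : ℤ) :
    2 * gammaMap m j + 1 = j ∨ 2 * gammaMap m j + 1 = j + m := by
  obtain ⟨s, rfl⟩ := hm
  unfold gammaMap
  split_ifs with hj <;> rw [Int.even_iff] at hj <;> omega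

theorem le_two_mul_add_one_and_dvd_sub_iff {m : ℤ} (hm : Odd m) (hm0 : 0 < m) (j k : ℤ) :
    j ≤ 2 * k + 1 ∧ m ∣ 2 * k + 1 - j ↔ gammaMap m j ≤ k ∧ m ∣ k - gammaMap m j := by
  set γ := gammaMap m j
  have hγ : 2 * γ + 1 = j ∨ 2 * γ + 1 = j + m := two_mul_gammaMap_add_one_eq_or hm j
  have hγ_dvd : m ∣ 2 * γ + 1 - j := by
    rcases hγ with h | h <;> rw [h] <;> simp
  have hdvd : m ∣ 2 * k + 1 - j ↔ m ∣ k - γ := by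
    rw [show 2 * k + 1 - j = (k - γ) * 2 + (2 * γ + 1 - j) by ring, dvd_add_left hγ_dvd]
    exact ⟨(Int.isCoprime_two_right.mpr hm).dvd_of_dvd_mul_right, (Dvd.dvd.mul_right · 2)⟩
  rw [hdvd]
  refine and_congr_left fun hd => ?_
  have hgap : 0 ≤ k - γ ∨ m ≤ γ - k := by
    rcases le_or_gt 0 (k - γ) with h | h
    · exact .inl h
    · exact .inr (Int.le_of_dvd (by omega) (by simpa using hd.neg_right))
  omega

theorem stmt_3_general (F : RatFunc ℂ → RatFunc ℂ)
    (hF : ∀ R : RatFunc ℂ, ∀ k : ℤ, coeffL (F R) k = coeffL R (2 * k + 1))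
    (m : ℕ) (hm : Odd m) (j : ℕ) :
    F (RatFunc.X ^ j / (RatFunc.X ^ m - 1)) =
      RatFunc.X ^ (gammaMap (m : ℤ) (j : ℤ)) / (RatFunc.X ^ m - 1) := by
  have hmz : Odd (m : ℤ) := hm.natCast
  have hγ0 : 0 ≤ gammaMap m j := by
    have := two_mul_gammaMap_add_one_eq_or hmz j
    omega
  obtain ⟨γ, hγ⟩ := Int.eq_ofNat_of_zero_le hγ0
  rw [hγ, zpow_natCast]
  refine RatFunc.coe_injective (HahnSeries.ext (funext fun k => ?_))
  change coeffL _ k = coeffL _ k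
  rw [hF]
  simp only [coeffL, RatFunc.coeff_coe_X_pow_div_X_pow_sub_one _ hm.pos.ne']
  simp only [← hγ, le_two_mul_add_one_and_dvd_sub_iff hmz (by exact_mod_cast hm.pos)]

/-- For an odd positive integer `m` and `j : ℕ`,
`𝔉(X^j / (X^m - 1)) = X^(γ_m(j)) / (X^m - 1)`. -/
theorem stmt_3 (F : RatFunc ℂ → RatFunc ℂ)
    (hF : ∀ R : RatFunc ℂ, ∀ k : ℤ, coeffL (F R) k = coeffL R (2 * k + 1))
    (m : ℕ) (hm : Odd m) (hm' : 0 < m) (j : ℕ) :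
    F (RatFunc.X ^ j / (RatFunc.X ^ m - 1)) =
      RatFunc.X ^ (gammaMap (m : ℤ) (j : ℤ)) / (RatFunc.X ^ m - 1) :=
  stmt_3_general F hF m hm j
end

section
/- For every integer r ≥ 1, set m = 2^r − 1 and R = 1/(X^m − 1) ∈ RatFunc ℂ. Then 𝔉^{(r)}(R) = R, while 𝔉^{(k)}(R) ≠ R for every k with 1 ≤ k < r. Hence 𝔉 has, for every r ≥ 1, a periodic orbit of exact length r. -/
namespace PowerSeries

theorem X_pow_sub_one_mul_mk_ite_dvd {R : Type*} [Ring R] {m : ℕ} (hm : m ≠ 0) :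
    ((X : R⟦X⟧) ^ m - 1) * mk (fun n => if m ∣ n then -1 else 0) = 1 := by
  ext n
  rw [sub_mul, one_mul, map_sub, coeff_X_pow_mul', coeff_one, coeff_mk]
  rcases Nat.eq_zero_or_pos n with rfl | hn
  · simp [hm]
  rw [if_neg hn.ne']
  by_cases hmn : m ≤ n
  · simp only [if_pos hmn, coeff_mk, Nat.dvd_sub_iff_left hmn dvd_rfl, sub_self]
  · have hndvd : ¬ m ∣ n := fun h => hmn (Nat.le_of_dvd hn h)
    simp [hmn, hndvd]

end PowerSeries

theorem coeffL_injective : Function.Injective coeffL := fun _ _ h =>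
  RingHom.injective _ (HahnSeries.ext h)

theorem coeffL_one_div_X_pow_sub_one {m : ℕ} (hm : m ≠ 0) (n : ℤ) :
    coeffL (1 / (RatFunc.X ^ m - 1)) n = if 0 ≤ n ∧ (m : ℤ) ∣ n then -1 else 0 := by
  set T : PowerSeries ℂ := .mk fun n => if m ∣ n then -1 else 0
  have hT : ((1 / (RatFunc.X ^ m - 1) : RatFunc ℂ) : LaurentSeries ℂ) = T := by
    rw [map_div₀, map_one]
    refine (eq_one_div_of_mul_eq_one_right ?_).symm
    rw [map_sub, map_pow, RatFunc.coe_X, RingHom.map_one, ← HahnSeries.ofPowerSeries_X, ← map_pow,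
      ← map_one (HahnSeries.ofPowerSeries ℤ ℂ), ← map_sub, ← map_mul,
      PowerSeries.X_pow_sub_one_mul_mk_ite_dvd hm, map_one]
  rw [coeffL, hT, PowerSeries.coeff_coe]
  rcases lt_or_ge n 0 with hn | hn
  · simp [hn, not_le.mpr hn]
  · lift n to ℕ using hn
    simp [T, Int.natCast_dvd_natCast]

theorem coeffL_iterate {F : RatFunc ℂ → RatFunc ℂ}
    (hF : ∀ R : RatFunc ℂ, ∀ k : ℤ, coeffL (F R) k = coeffL R (2 * k + 1))
    (k : ℕ) (R : RatFunc ℂ) (n : ℤ) :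
    coeffL (F^[k] R) n = coeffL R (2 ^ k * (n + 1) - 1) := by
  induction k generalizing n with
  | zero => simp
  | succ k ih => rw [Function.iterate_succ_apply', hF, ih]; ring_nf

theorem Int.nonneg_and_dvd_mul_add_one_add_iff {m n : ℤ} (hm : 0 ≤ m) :
    (0 ≤ m * (n + 1) + n ∧ m ∣ m * (n + 1) + n) ↔ (0 ≤ n ∧ m ∣ n) := by
  rw [dvd_add_right (dvd_mul_right m _)]
  refine and_congr_left fun _ => ⟨fun h => ?_, fun h => by positivity⟩
  by_contra! hn
  nlinarith

/-- For every `r ≥ 1`, with `m = 2^r - 1` and `R = 1/(X^m - 1)`, the map `𝔉` satisfies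
`𝔉^(r)(R) = R` while `𝔉^(k)(R) ≠ R` for `1 ≤ k < r`: `𝔉` has a periodic orbit of exact
length `r`. -/
theorem stmt_8 (F : RatFunc ℂ → RatFunc ℂ)
    (hF : ∀ R : RatFunc ℂ, ∀ k : ℤ, coeffL (F R) k = coeffL R (2 * k + 1))
    (r : ℕ) (hr : 1 ≤ r) :
    F^[r] (1 / (RatFunc.X ^ (2 ^ r - 1) - 1)) = 1 / (RatFunc.X ^ (2 ^ r - 1) - 1) ∧
    ∀ k : ℕ, 1 ≤ k → k < r →
      F^[k] (1 / (RatFunc.X ^ (2 ^ r - 1) - 1)) ≠ 1 / (RatFunc.X ^ (2 ^ r - 1) - 1) := by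
  have hm : 2 ^ r - 1 ≠ 0 := Nat.sub_ne_zero_of_lt (Nat.one_lt_two_pow (by omega))
  have hcast : ((2 ^ r - 1 : ℕ) : ℤ) = 2 ^ r - 1 := by simp [Nat.one_le_two_pow]
  refine ⟨coeffL_injective (funext fun n => ?_), fun k hk hkr hperiodic => ?_⟩
  · have hshift : (2 : ℤ) ^ r * (n + 1) - 1 = (2 ^ r - 1) * (n + 1) + n := by ring
    rw [coeffL_iterate hF, coeffL_one_div_X_pow_sub_one hm, coeffL_one_div_X_pow_sub_one hm,
      hcast, hshift]
    simp only [Int.nonneg_and_dvd_mul_add_one_add_iff (sub_nonneg.mpr (one_le_pow₀ one_le_two))]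
  · have h0 := congrArg (coeffL · 0) hperiodic
    simp only [coeffL_iterate hF, coeffL_one_div_X_pow_sub_one hm, hcast] at h0
    have hk_lt : (2 : ℤ) ^ k < 2 ^ r := pow_lt_pow_right₀ one_lt_two hkr
    have hk_pos : (1 : ℤ) < 2 ^ k := one_lt_pow₀ one_lt_two (by omega)
    have hndvd : ¬ (2 ^ r - 1 : ℤ) ∣ 2 ^ k - 1 := fun h => by
      linarith [Int.eq_zero_of_dvd_of_nonneg_of_lt (by linarith) (by linarith) h]
    simp [hndvd] at h0
end

section
/- Let R ∈ RatFunc ℂ satisfy 𝔉(R) = R, write R = P/Q with P, Q ∈ ℂ[X], Q ≠ 0, and let r be an odd positive integer. Then the rational function S = X^{r−1} · P(X^r) / Q(X^r) ∈ RatFunc ℂ (where P(X^r) and Q(X^r) denote the compositions of P and Q with X^r) also satisfies 𝔉(S) = S. -/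
open Polynomial HahnSeries
open scoped RatFunc

namespace LaurentSeries

variable {R : Type*} [Semiring R]

noncomputable def expand (r : ℕ) (hr : 0 < r) : LaurentSeries R →+* LaurentSeries R :=
  embDomainRingHom (AddMonoidHom.mulLeft (r : ℤ)) (mul_right_injective₀ (by positivity))
    fun _ _ => mul_le_mul_iff_right₀ (by positivity)

variable {r : ℕ} {hr : 0 < r}

theorem coeff_expand_mul (f : LaurentSeries R) (n : ℤ) :
    (expand r hr f).coeff (r * n) = f.coeff n :=
  embDomain_coeff (f := ⟨⟨AddMonoidHom.mulLeft (r : ℤ), _⟩, _⟩)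

theorem coeff_expand_of_not_dvd (f : LaurentSeries R) {n : ℤ} (hn : ¬ (r : ℤ) ∣ n) :
    (expand r hr f).coeff n = 0 :=
  embDomain_of_notMem_range fun ⟨m, hm⟩ => hn ⟨m, hm.symm⟩

theorem expand_single (n : ℤ) (a : R) : expand r hr (single n a) = single (r * n) a :=
  embDomain_single

theorem coeff_single_mul_expand_mul_sub_one (f : LaurentSeries R) (m : ℤ) :
    (single ((r - 1 : ℕ) : ℤ) 1 * expand r hr f).coeff (r * m - 1) = f.coeff (m - 1) := by
  rw [coeff_single_mul, one_mul, Nat.cast_pred hr, show r * m - 1 - (r - 1) = r * (m - 1) by ring,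
    coeff_expand_mul]

theorem coeff_single_mul_expand_of_not_dvd (f : LaurentSeries R) {n : ℤ}
    (hn : ¬ (r : ℤ) ∣ n + 1) :
    (single ((r - 1 : ℕ) : ℤ) 1 * expand r hr f).coeff n = 0 := by
  rw [coeff_single_mul, one_mul, Nat.cast_pred hr, coeff_expand_of_not_dvd]
  rwa [sub_sub_eq_add_sub, dvd_sub_self_right]

theorem coeff_two_mul_add_one_single_mul_expand (hodd : Odd r) (f : LaurentSeries R)
    (hf : ∀ k, f.coeff (2 * k + 1) = f.coeff k) (n : ℤ) :
    (single ((r - 1 : ℕ) : ℤ) 1 * expand r hodd.pos f).coeff (2 * n + 1) =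
      (single ((r - 1 : ℕ) : ℤ) 1 * expand r hodd.pos f).coeff n := by
  by_cases hdvd : (r : ℤ) ∣ n + 1
  · obtain ⟨m, hm⟩ := hdvd
    obtain rfl : n = r * m - 1 := by linarith
    rw [show 2 * (r * m - 1) + 1 = r * (2 * m) - 1 by ring,
      coeff_single_mul_expand_mul_sub_one, coeff_single_mul_expand_mul_sub_one,
      show 2 * m - 1 = 2 * (m - 1) + 1 by ring, hf]
  · have hcop : IsCoprime (r : ℤ) 2 := by
      exact_mod_cast Nat.isCoprime_iff_coprime.mpr (Nat.coprime_two_right.mpr hodd)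
    have hdvd' : ¬ (r : ℤ) ∣ 2 * n + 1 + 1 := fun h =>
      hdvd (hcop.dvd_of_dvd_mul_left (by rwa [show 2 * n + 1 + 1 = 2 * (n + 1) by ring] at h))
    rw [coeff_single_mul_expand_of_not_dvd _ hdvd', coeff_single_mul_expand_of_not_dvd _ hdvd]

end LaurentSeries

namespace RatFunc

theorem coe_algebraMap_comp_X_pow {K : Type*} [Field K] (r : ℕ) (hr : 0 < r) (p : K[X]) :
    (algebraMap K[X] (RatFunc K) (p.comp (Polynomial.X ^ r)) : LaurentSeries K) =
      LaurentSeries.expand r hr (algebraMap K[X] (RatFunc K) p) := by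
  simp only [← IsScalarTower.algebraMap_apply]
  set ψ := algebraMap K[X] (LaurentSeries K)
  have key : ψ.comp (compRingHom (Polynomial.X ^ r)) = (LaurentSeries.expand r hr).comp ψ := by
    refine Polynomial.ringHom_ext (fun a => ?_) ?_
    · simp [ψ, LaurentSeries.expand_single]
    · simp [ψ, LaurentSeries.expand_single, single_pow]
  exact congrArg (· p) key

end RatFunc

theorem stmt_18_general (F : RatFunc ℂ → RatFunc ℂ)
    (hF : ∀ R : RatFunc ℂ, ∀ k : ℤ, coeffL (F R) k = coeffL R (2 * k + 1))
    (P Q : Polynomial ℂ)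
    (hfix : F (algebraMap (Polynomial ℂ) (RatFunc ℂ) P /
      algebraMap (Polynomial ℂ) (RatFunc ℂ) Q) =
      algebraMap (Polynomial ℂ) (RatFunc ℂ) P /
        algebraMap (Polynomial ℂ) (RatFunc ℂ) Q)
    (r : ℕ) (hr : Odd r) :
    F (RatFunc.X ^ (r - 1) *
        algebraMap (Polynomial ℂ) (RatFunc ℂ) (P.comp (Polynomial.X ^ r)) /
        algebraMap (Polynomial ℂ) (RatFunc ℂ) (Q.comp (Polynomial.X ^ r))) =
      RatFunc.X ^ (r - 1) *
        algebraMap (Polynomial ℂ) (RatFunc ℂ) (P.comp (Polynomial.X ^ r)) /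
        algebraMap (Polynomial ℂ) (RatFunc ℂ) (Q.comp (Polynomial.X ^ r)) := by
  set R := algebraMap (Polynomial ℂ) (RatFunc ℂ) P / algebraMap (Polynomial ℂ) (RatFunc ℂ) Q
  set S := RatFunc.X ^ (r - 1) *
    algebraMap (Polynomial ℂ) (RatFunc ℂ) (P.comp (Polynomial.X ^ r)) /
    algebraMap (Polynomial ℂ) (RatFunc ℂ) (Q.comp (Polynomial.X ^ r))
  have hS : (S : LaurentSeries ℂ) =
      single ((r - 1 : ℕ) : ℤ) 1 * LaurentSeries.expand r hr.pos (R : LaurentSeries ℂ) := by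
    simp only [S, R, map_div₀, map_mul, map_pow, RatFunc.coe_X, single_pow, one_pow, nsmul_eq_mul,
      mul_one, RatFunc.coe_algebraMap_comp_X_pow r hr.pos, mul_div_assoc]
  have hR (k : ℤ) : coeffL R (2 * k + 1) = coeffL R k := by
    simpa only [hfix] using (hF R k).symm
  refine (algebraMap (RatFunc ℂ) (LaurentSeries ℂ)).injective
    (HahnSeries.coeff_injective (funext fun n => ?_))
  rw [← coeffL, hF, coeffL, hS,
    LaurentSeries.coeff_two_mul_add_one_single_mul_expand hr _ hR]

/-- If `R = P/Q` is fixed by `𝔉` and `r` is an odd positive integer, then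
`S = X^(r-1) P(X^r)/Q(X^r)` is also fixed by `𝔉`. -/
theorem stmt_18 (F : RatFunc ℂ → RatFunc ℂ)
    (hF : ∀ R : RatFunc ℂ, ∀ k : ℤ, coeffL (F R) k = coeffL R (2 * k + 1))
    (P Q : Polynomial ℂ) (hQ : Q ≠ 0)
    (hfix : F (algebraMap (Polynomial ℂ) (RatFunc ℂ) P /
      algebraMap (Polynomial ℂ) (RatFunc ℂ) Q) =
      algebraMap (Polynomial ℂ) (RatFunc ℂ) P /
        algebraMap (Polynomial ℂ) (RatFunc ℂ) Q)
    (r : ℕ) (hr : Odd r) (hr' : 0 < r) :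
    F (RatFunc.X ^ (r - 1) *
        algebraMap (Polynomial ℂ) (RatFunc ℂ) (P.comp (Polynomial.X ^ r)) /
        algebraMap (Polynomial ℂ) (RatFunc ℂ) (Q.comp (Polynomial.X ^ r))) =
      RatFunc.X ^ (r - 1) *
        algebraMap (Polynomial ℂ) (RatFunc ℂ) (P.comp (Polynomial.X ^ r)) /
        algebraMap (Polynomial ℂ) (RatFunc ℂ) (Q.comp (Polynomial.X ^ r)) :=
  stmt_18_general F hF P Q hfix r hr
end
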